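/- If there exists a resilient supervisor S^R for the attacked closed-loop system G^R with respect to Σ_{c,v} and G_robust, then the attacked system Sa/Ga is AE-robust recoverable with respect to G_robust, i.e., every detection state x_d ∈ X_det admits a robust-recovery strategy leading to G_robust. -/

import Mathlib

/-!
Common formalization of supervisory control of DES under actuator-enablement
attacks, following the natural-language context.

* A plant is a DFA with partial transition function `f : X → E → Option X`
  and initial state `x0`; `runFrom` extends `f` to strings; `Lang f x0` is the
  generated language.
* A strict subautomaton of an automaton is represented by its state set
  `Q : Set X`, with induced transition function `subStep f Q`.
* Attacked events are modelled by the alphabet `E ⊕ E`: `Sum.inl e` is the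
  ordinary event `e`, `Sum.inr e` is the attacked copy `eᵃ` (meaningful for
  `e ∈ Scv`).
* The attacked plant `gaStep`, attacked supervisor `saStep` (state `none`
  playing the role of the fresh state `A`), and their synchronous composition
  `grStep` (the attacked closed-loop system `G^R = Sa ∥ Ga`) are defined below,
  together with detection states, robust-recovery, the resilient specification
  `Ha`, supervisors for `G^R`, and resilience.
-/

open Classical List

namespace RobustRec

variable {X : Type*} {E : Type*}

/-- Extension of a partial transition function to strings. -/
def runFrom (f : X → E → Option X) : X → List E → Option X
  | x, [] => some x
  | x, e :: w => (f x e).bind fun y => runFrom f y w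

/-- Language generated from state `x0`. -/
def Lang (f : X → E → Option X) (x0 : X) : Set (List E) :=
  {w | (runFrom f x0 w).isSome}

/-- Transition function of the strict (induced) subautomaton with state set `Q`:
a transition is defined iff it is defined in the big automaton and both its
endpoints lie in `Q`. -/
noncomputable def subStep (f : X → E → Option X) (Q : Set X) : X → E → Option X :=
  fun x e => (f x e).bind fun y => if x ∈ Q ∧ y ∈ Q then some y else none

/-- Vulnerable states: those where some vulnerable controllable event is feasible. -/
def vulnStates (f : X → E → Option X) (Scv : Set E) : Set X :=
  {x | ∃ e ∈ Scv, (f x e).isSome}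

/-- A supervisor for the plant `(f, x0)`, represented by its state set `XS`
(the induced strict subautomaton): it contains `x0`, is controllable w.r.t.
the uncontrollable events `Suc`, and is safe w.r.t. the unsafe states `XUS`. -/
structure IsSupervisor (f : X → E → Option X) (x0 : X) (Suc : Set E)
    (XUS : Set X) (XS : Set X) : Prop where
  init_mem : x0 ∈ XS
  controllable : ∀ x ∈ XS, ∀ e ∈ Suc, ∀ y, f x e = some y → y ∈ XS
  safe : ∀ x ∈ XS, x ∉ XUS

/-- The attacked plant `Ga`: all transitions of `G`, plus, for every transition
on a vulnerable event `σ ∈ Scv`, a parallel transition on its attacked copy. -/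
noncomputable def gaStep (f : X → E → Option X) (Scv : Set E) :
    X → E ⊕ E → Option X
  | x, Sum.inl e => f x e
  | x, Sum.inr e => if e ∈ Scv then f x e else none

/-- The attacked supervisor `Sa`: states are `some x` for states `x` of `S`
plus the fresh state `A = none` with a self-loop on every event; for every
state `x` of `S` and `σ ∈ Scv` with `f_S(x,σ)` undefined there is a transition
on `σᵃ` from `x` to `A`. -/
noncomputable def saStep (f : X → E → Option X) (XS : Set X) (Scv : Set E) :
    Option X → E ⊕ E → Option (Option X)
  | none, _ => some none
  | some x, Sum.inl e => (subStep f XS x e).map some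
  | some x, Sum.inr e =>
      if e ∈ Scv ∧ x ∈ XS ∧ subStep f XS x e = none then some none else none

/-- Synchronous composition of two automata over a common alphabet. -/
def prodStep {X1 X2 A : Type*} (f1 : X1 → A → Option X1) (f2 : X2 → A → Option X2) :
    X1 × X2 → A → Option (X1 × X2) :=
  fun p a => (f1 p.1 a).bind fun y1 => (f2 p.2 a).map fun y2 => (y1, y2)

/-- The attacked closed-loop system `G^R = Sa ∥ Ga`. Its post-attack states are
those of the form `(none, x)`, i.e. `(A, x)`. -/
noncomputable def grStep (f : X → E → Option X) (XS : Set X) (Scv : Set E) :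
    Option X × X → E ⊕ E → Option (Option X × X) :=
  prodStep (saStep f XS Scv) (gaStep f Scv)

/-- Initial state of `G^R`. -/
def grInit (x0 : X) : Option X × X := (some x0, x0)

/-- Embedding of strings over `Σ` into strings over `Σ ∪ Σᵃ_{c,v}`. -/
def embed : List E → List (E ⊕ E) := List.map Sum.inl

/-- The language `L(Sa/Ga)` of the attacked closed-loop system. -/
noncomputable def GRLang (f : X → E → Option X) (x0 : X) (XS : Set X) (Scv : Set E) :
    Set (List (E ⊕ E)) :=
  Lang (grStep f XS Scv) (grInit x0)

/-- The detection language `L_det = {sσ ∈ L(G) | s ∈ L(S/G), σ ∈ Σ_{c,v},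
sσᵃ ∈ L(Sa/Ga)}`. -/
noncomputable def detLang (f : X → E → Option X) (x0 : X) (XS : Set X) (Scv : Set E) :
    Set (List E) :=
  {w | ∃ s σ, w = s ++ [σ] ∧ σ ∈ Scv ∧ w ∈ Lang f x0 ∧
        s ∈ Lang (subStep f XS) x0 ∧ embed s ++ [Sum.inr σ] ∈ GRLang f x0 XS Scv}

/-- The detection states `X_det = {f(x0, sσ) : sσ ∈ L_det}`. -/
noncomputable def detStates (f : X → E → Option X) (x0 : X) (XS : Set X) (Scv : Set E) :
    Set X :=
  {x | ∃ w ∈ detLang f x0 XS Scv, runFrom f x0 w = some x}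

/-- `r` is a robust-recovery strategy from `x` relative to the candidate set `R`
of recoverable states, the robust region `XR` and the bad states
`Bad = X_v ∪ X_US`: (1) `r` leads into `XR`; (2) no prefix of `r` visits `Bad`;
(3) no prefix of `r` can uncontrollably reach `Bad`; (4) any one-step
uncontrollable deviation from `r` lands in `R`. -/
def IsRecoveryPath (f : X → E → Option X) (Suc : Set E) (XR Bad : Set X)
    (R : Set X) (x : X) (r : List E) : Prop :=
  (∃ y ∈ XR, runFrom f x r = some y) ∧
  (∀ t, t <+: r → ∀ y, runFrom f x t = some y → y ∉ Bad) ∧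
  (∀ t, t <+: r → ∀ u : List E, (∀ e ∈ u, e ∈ Suc) →
      ∀ y, runFrom f x (t ++ u) = some y → y ∉ Bad) ∧
  (∀ t, t <+: r → ∀ e ∈ Suc, ∀ y, runFrom f x (t ++ [e]) = some y →
      ¬ (t ++ [e]) <+: r → y ∈ R)

/-- The set `R` of AE-robust recoverable states: the largest subset of
`X \ Bad` each of whose elements admits a robust-recovery strategy (relative
to the set itself). -/
def recSet (f : X → E → Option X) (Suc : Set E) (XR Bad : Set X) : Set X :=
  ⋃₀ {R | R ⊆ Badᶜ ∧ ∀ x ∈ R, ∃ r, IsRecoveryPath f Suc XR Bad R x r}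

/-- The attacked system `Sa/Ga` is AE-robust recoverable w.r.t. the robust
region `XR` if every detection state is AE-robust recoverable. -/
noncomputable def AERobustRecoverable (f : X → E → Option X) (x0 : X)
    (Suc Scv : Set E) (XUS XS XR : Set X) : Prop :=
  detStates f x0 XS Scv ⊆ recSet f Suc XR (vulnStates f Scv ∪ XUS)

/-- Reachable states of `G^R` (the state set of the synchronous composition). -/
noncomputable def grStates (f : X → E → Option X) (x0 : X) (XS : Set X) (Scv : Set E) :
    Set (Option X × X) :=
  {p | ∃ w, runFrom (grStep f XS Scv) (grInit x0) w = some p}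

/-- A supervisor for `G^R`, represented by its state set `Q` (inducing a strict
subautomaton of `G^R`): it contains the initial state and is controllable
w.r.t. `Suc` (attacked events being controllable). -/
structure IsGRSupervisor (f : X → E → Option X) (x0 : X) (Suc Scv : Set E)
    (XS : Set X) (Q : Set (Option X × X)) : Prop where
  subset : Q ⊆ grStates f x0 XS Scv
  init_mem : grInit x0 ∈ Q
  controllable : ∀ p ∈ Q, ∀ e ∈ Suc, ∀ q, grStep f XS Scv p (Sum.inl e) = some q → q ∈ Q

/-- State set of the resilient specification `Ha`: `G^R` minus every post-attack
state `(A, x)` with `x ∈ X_v ∪ X_US`. -/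
def haCarrier (f : X → E → Option X) (Scv : Set E) (XUS : Set X) :
    Set (Option X × X) :=
  {p | ¬ (p.1 = none ∧ p.2 ∈ vulnStates f Scv ∪ XUS)}

/-- Marked states of `Ha`: post-attack states `(A, x)` with `x` in the robust
region. -/
def haMarked (XR : Set X) : Set (Option X × X) :=
  {p | p.1 = (none : Option X) ∧ p.2 ∈ XR}

/-- The closed-loop language `L(S^R/G^R) = L(S^R)` of a supervisor `Q` for `G^R`. -/
noncomputable def SRLang (f : X → E → Option X) (x0 : X) (XS : Set X) (Scv : Set E)
    (Q : Set (Option X × X)) : Set (List (E ⊕ E)) :=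
  Lang (subStep (grStep f XS Scv) Q) (grInit x0)

/-- `S^R` is safe w.r.t. the resilient specification `Ha`: `L(S^R) ⊆ L(Ha)`. -/
noncomputable def SafeWrtHa (f : X → E → Option X) (x0 : X) (XS : Set X)
    (Scv : Set E) (XUS : Set X) (Q : Set (Option X × X)) : Prop :=
  SRLang f x0 XS Scv Q ⊆
    Lang (subStep (grStep f XS Scv) (haCarrier f Scv XUS)) (grInit x0)

/-- `S^R` is nonblocking: from every post-attack state of `S^R`, a marked state
of `Ha` is reachable within `S^R`. -/
noncomputable def NonblockingSR (f : X → E → Option X) (XS : Set X) (Scv : Set E)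
    (XR : Set X) (Q : Set (Option X × X)) : Prop :=
  ∀ p ∈ Q, p.1 = (none : Option X) →
    ∃ w q, runFrom (subStep (grStep f XS Scv) Q) p w = some q ∧ q ∈ haMarked XR

/-- `S^R` is maximally permissive among safe nonblocking supervisors for `G^R`. -/
noncomputable def MaxPermissive (f : X → E → Option X) (x0 : X) (Suc Scv : Set E)
    (XS XUS XR : Set X) (Q : Set (Option X × X)) : Prop :=
  ∀ Q', IsGRSupervisor f x0 Suc Scv XS Q' → SafeWrtHa f x0 XS Scv XUS Q' →
    NonblockingSR f XS Scv XR Q' → SRLang f x0 XS Scv Q' ⊆ SRLang f x0 XS Scv Q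

/-- `S^R` (given by its state set `Q`) is resilient w.r.t. `Scv` and the robust
region `XR`: it permits the full nominal behavior `L(S/G)`, and after any
AE-attack `sσᵃ` feasible in `L(Sa/Ga)` it permits the attack, keeps all its
subsequent behavior out of `Bad = X_v ∪ X_US`, and can always be extended
within `L(S^R)` to reach a post-attack state `(A, x)` with `x ∈ XR`; i.e. it
enforces a robust-recovery strategy from the detection state. -/
noncomputable def ResilientSup (f : X → E → Option X) (x0 : X) (Scv : Set E)
    (XS XR Bad : Set X) (Q : Set (Option X × X)) : Prop :=
  (∀ s ∈ Lang (subStep f XS) x0, embed s ∈ SRLang f x0 XS Scv Q) ∧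
  ∀ s : List E, embed s ∈ SRLang f x0 XS Scv Q →
    ∀ σ ∈ Scv, embed s ++ [Sum.inr σ] ∈ GRLang f x0 XS Scv →
      embed s ++ [Sum.inr σ] ∈ SRLang f x0 XS Scv Q ∧
      ∀ t : List E, embed s ++ [Sum.inr σ] ++ embed t ∈ SRLang f x0 XS Scv Q →
        (∀ t', t' <+: t → ∀ y, runFrom f x0 (s ++ σ :: t') = some y →
            y ∉ Bad) ∧
        ∃ u q, runFrom (subStep (grStep f XS Scv) Q) (grInit x0)
                 (embed s ++ [Sum.inr σ] ++ embed t ++ u) = some q ∧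
               q.1 = (none : Option X) ∧ q.2 ∈ XR

/-- A prefix-closed language. -/
def PrefixClosed (K : Set (List E)) : Prop := ∀ s t : List E, s ++ t ∈ K → s ∈ K

/-- `K` is controllable w.r.t. the language `M` and uncontrollable events `Suc`. -/
def ControllableLang (K M : Set (List E)) (Suc : Set E) : Prop :=
  ∀ s ∈ K, ∀ e ∈ Suc, s ++ [e] ∈ M → s ++ [e] ∈ K

/-- The supremal controllable (prefix-closed) sublanguage of `M` w.r.t. `LG`. -/
def supC (M LG : Set (List E)) (Suc : Set E) : Set (List E) :=
  ⋃₀ {K | K ⊆ M ∧ PrefixClosed K ∧ ControllableLang K LG Suc}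

end RobustRec

/-!
Let `P` be the set of plant states `x` such that `S^R` can reach the post-attack state `(A, x)`.
Resilience keeps `P` away from `X_v ∪ X_US`, and controllability of `S^R` (the state `A` carries
a self-loop on every event) closes `P` under uncontrollable plant moves. After an attack `S^R` can
only execute plain events, since a second attacked event would start at a vulnerable state; so the
extension to a marked state promised by resilience is a plant string `r` whose prefixes all stay
in `P`. Hence `P` is a set of the kind whose union defines `R`, and it contains every detection
state (take the empty continuation after the attack).
-/

namespace RobustRec

section Runs

variable {X Y A B : Type*}

theorem runFrom_append (f : X → A → Option X) (x : X) (a b : List A) :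
    runFrom f x (a ++ b) = (runFrom f x a).bind fun y => runFrom f y b := by
  induction a generalizing x with
  | nil => rfl
  | cons e a ih => simp only [List.cons_append, runFrom, ih, Option.bind_assoc]

theorem runFrom_append_eq_some {f : X → A → Option X} {x y : X} {a b : List A} :
    runFrom f x (a ++ b) = some y ↔ ∃ m, runFrom f x a = some m ∧ runFrom f m b = some y := by
  rw [runFrom_append, Option.bind_eq_some_iff]

theorem runFrom_map {f : X → A → Option X} {g : Y → B → Option Y} (π : X → Y) (h : A → B)
    (hstep : ∀ x a y, f x a = some y → g (π x) (h a) = some (π y)) {x y : X} {w : List A}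
    (hw : runFrom f x w = some y) : runFrom g (π x) (w.map h) = some (π y) := by
  induction w generalizing x with
  | nil => cases hw; rfl
  | cons a w ih =>
    obtain ⟨m, hm, hw⟩ := Option.bind_eq_some_iff.mp hw
    simp only [List.map_cons, runFrom, hstep _ _ _ hm, Option.bind_some]
    exact ih hw

theorem runFrom_mem_of_step_mem {f : X → A → Option X} {R : Set X} {U : Set A}
    (hR : ∀ x ∈ R, ∀ a ∈ U, ∀ y, f x a = some y → y ∈ R) {x y : X} {w : List A}
    (hx : x ∈ R) (hw : ∀ a ∈ w, a ∈ U) (hy : runFrom f x w = some y) : y ∈ R := by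
  induction w generalizing x with
  | nil => cases hy; exact hx
  | cons a w ih =>
    obtain ⟨m, hm, hy⟩ := Option.bind_eq_some_iff.mp hy
    exact ih (hR x hx a (hw a List.mem_cons_self) m hm)
      (fun b hb => hw b (List.mem_cons_of_mem a hb)) hy

theorem subStep_eq_some {f : X → A → Option X} {Q : Set X} {x y : X} {a : A} :
    subStep f Q x a = some y ↔ f x a = some y ∧ x ∈ Q ∧ y ∈ Q := by
  simp only [subStep, Option.bind_eq_some_iff, Option.ite_none_right_eq_some, Option.some.injEq]
  constructor
  · rintro ⟨z, hz, hQ, rfl⟩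
    exact ⟨hz, hQ⟩
  · rintro ⟨hy, hQ⟩
    exact ⟨y, hy, hQ, rfl⟩

theorem runFrom_of_runFrom_subStep {f : X → A → Option X} {Q : Set X} {x y : X} {w : List A}
    (h : runFrom (subStep f Q) x w = some y) : runFrom f x w = some y := by
  simpa using runFrom_map id id (fun _ _ _ h => (subStep_eq_some.mp h).1) h

theorem mem_of_runFrom_subStep {f : X → A → Option X} {Q : Set X} {x y : X} {w : List A}
    (hx : x ∈ Q) (h : runFrom (subStep f Q) x w = some y) : y ∈ Q :=
  runFrom_mem_of_step_mem (U := Set.univ) (fun _ _ _ _ _ h => (subStep_eq_some.mp h).2.2) hx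
    (fun _ _ => trivial) h

end Runs

theorem eq_map_inl_or_exists_inr {α β : Type*} (u : List (α ⊕ β)) :
    (∃ r : List α, u = r.map Sum.inl) ∨
      ∃ (c : List α) (b : β) (v : List (α ⊕ β)), u = c.map Sum.inl ++ Sum.inr b :: v := by
  induction u with
  | nil => exact Or.inl ⟨[], rfl⟩
  | cons a u ih =>
    cases a with
    | inl e =>
      exact ih.imp (fun ⟨r, h⟩ => ⟨e :: r, by simp [h]⟩)
        (fun ⟨c, b, v, h⟩ => ⟨e :: c, b, v, by simp [h]⟩)
    | inr b => exact Or.inr ⟨[], b, u, rfl⟩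

theorem subset_recSet {X E : Type*} {f : X → E → Option X} {Suc : Set E} {XR Bad R : Set X}
    (hbad : R ⊆ Badᶜ) (hstep : ∀ x ∈ R, ∀ e ∈ Suc, ∀ y, f x e = some y → y ∈ R)
    (hpath : ∀ x ∈ R, ∃ r, (∃ y ∈ XR, runFrom f x r = some y) ∧
      ∀ t, t <+: r → ∀ y, runFrom f x t = some y → y ∈ R) :
    R ⊆ recSet f Suc XR Bad := by
  intro x hx
  refine Set.mem_sUnion.mpr ⟨R, ⟨hbad, fun x hx => ?_⟩, hx⟩
  obtain ⟨r, hreach, hprefix⟩ := hpath x hx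
  have hdeviate : ∀ t, t <+: r → ∀ u : List E, (∀ e ∈ u, e ∈ Suc) →
      ∀ y, runFrom f x (t ++ u) = some y → y ∈ R := by
    intro t ht u hu y hy
    obtain ⟨m, hm, hy⟩ := runFrom_append_eq_some.mp hy
    exact runFrom_mem_of_step_mem hstep (hprefix t ht m hm) hu hy
  exact ⟨r, hreach, fun t ht y hy => hbad (hprefix t ht y hy),
    fun t ht u hu y hy => hbad (hdeviate t ht u hu y hy),
    fun t ht e he y hy _ => hdeviate t ht [e] (by simpa using he) y hy⟩

section AttackedSystem

variable {X E : Type*} {f : X → E → Option X} {XS : Set X} {Scv : Set E}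

theorem snd_of_grStep_eq_some {p q : Option X × X} {a : E ⊕ E}
    (h : grStep f XS Scv p a = some q) :
    f p.2 (Sum.elim id id a) = some q.2 := by
  obtain ⟨q₁, -, q₂, hq₂, rfl⟩ : ∃ q₁, saStep f XS Scv p.1 a = some q₁ ∧
      ∃ q₂, gaStep f Scv p.2 a = some q₂ ∧ (q₁, q₂) = q := by
    simpa [grStep, prodStep, Option.bind_eq_some_iff] using h
  cases a with
  | inl e => exact hq₂
  | inr e =>
    simp only [gaStep] at hq₂
    split_ifs at hq₂
    exact hq₂

theorem of_grStep_inr_eq_some {p q : Option X × X} {e : E}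
    (h : grStep f XS Scv p (Sum.inr e) = some q) : q.1 = none ∧ p.2 ∈ vulnStates f Scv := by
  obtain ⟨q₁, hq₁, q₂, hq₂, rfl⟩ : ∃ q₁, saStep f XS Scv p.1 (Sum.inr e) = some q₁ ∧
      ∃ q₂, gaStep f Scv p.2 (Sum.inr e) = some q₂ ∧ (q₁, q₂) = q := by
    simpa [grStep, prodStep, Option.bind_eq_some_iff] using h
  simp only [gaStep] at hq₂
  split_ifs at hq₂ with he
  refine ⟨?_, e, he, by simp [hq₂]⟩
  rcases p with ⟨_ | x, _⟩
  · simpa [saStep] using hq₁.symm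
  · simp only [saStep] at hq₁
    split_ifs at hq₁
    simpa using hq₁.symm

theorem runFrom_grStep_none_embed (x : X) (u : List E) :
    runFrom (grStep f XS Scv) (none, x) (embed u) = (runFrom f x u).map (Prod.mk none) := by
  induction u generalizing x with
  | nil => rfl
  | cons e u ih =>
    have hstep : grStep f XS Scv (none, x) (Sum.inl e) = (f x e).map (Prod.mk none) := by
      simp [grStep, prodStep, saStep, gaStep]
    simp only [embed, List.map_cons, runFrom, hstep] at ih ⊢
    cases f x e
    · rfl
    · exact ih _

theorem runFrom_grStep_snd {p q : Option X × X} {w : List (E ⊕ E)}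
    (h : runFrom (grStep f XS Scv) p w = some q) :
    runFrom f p.2 (w.map (Sum.elim id id)) = some q.2 :=
  runFrom_map Prod.snd (Sum.elim id id) (fun _ _ _ => snd_of_grStep_eq_some) h

end AttackedSystem

section Resilience

variable {X E : Type*} {f : X → E → Option X} {x0 : X} {Suc Scv : Set E} {XS XR Bad : Set X}
  {Q : Set (Option X × X)}

def postAttackStates (f : X → E → Option X) (x0 : X) (XS : Set X) (Scv : Set E)
    (Q : Set (Option X × X)) : Set X :=
  {x | ∃ s σ t, σ ∈ Scv ∧ embed s ∈ SRLang f x0 XS Scv Q ∧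
    embed s ++ [Sum.inr σ] ∈ GRLang f x0 XS Scv ∧
    runFrom (subStep (grStep f XS Scv) Q) (grInit x0) (embed s ++ [Sum.inr σ] ++ embed t) =
      some (none, x)}

theorem runFrom_of_mem_postAttackStates {x : X} {c : List E} {p : Option X × X}
    (hx : x ∈ postAttackStates f x0 XS Scv Q)
    (hp : runFrom (subStep (grStep f XS Scv) Q) (none, x) (embed c) = some p) :
    ∃ y ∈ postAttackStates f x0 XS Scv Q, p = (none, y) ∧ runFrom f x c = some y := by
  obtain ⟨s, σ, t, hσ, hs, hatt, hrun⟩ := hx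
  have hgr := runFrom_of_runFrom_subStep hp
  rw [runFrom_grStep_none_embed, Option.map_eq_some_iff] at hgr
  obtain ⟨y, hy, rfl⟩ := hgr
  refine ⟨y, ⟨s, σ, t ++ c, hσ, hs, hatt, ?_⟩, rfl, hy⟩
  have hword : embed s ++ [Sum.inr σ] ++ embed (t ++ c) =
      embed s ++ [Sum.inr σ] ++ embed t ++ embed c := by
    simp [embed]
  rw [hword, runFrom_append, hrun, Option.bind_some, hp]

theorem postAttackStates_subset_compl (hres : ResilientSup f x0 Scv XS XR Bad Q) :
    postAttackStates f x0 XS Scv Q ⊆ Badᶜ := by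
  rintro x ⟨s, σ, t, hσ, hs, hatt, hrun⟩
  have hplant : runFrom f x0 (s ++ σ :: t) = some x := by
    simpa [embed, grInit] using runFrom_grStep_snd (runFrom_of_runFrom_subStep hrun)
  exact ((hres.2 s hs σ hσ hatt).2 t (Option.isSome_iff_exists.mpr ⟨_, hrun⟩)).1 t
    List.prefix_rfl x hplant

theorem postAttackStates_step_mem (hQ : IsGRSupervisor f x0 Suc Scv XS Q) {x y : X} {e : E}
    (hx : x ∈ postAttackStates f x0 XS Scv Q) (he : e ∈ Suc) (hy : f x e = some y) :
    y ∈ postAttackStates f x0 XS Scv Q := by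
  obtain ⟨s, σ, t, hσ, hs, hatt, hrun⟩ := hx
  have hgr : grStep f XS Scv (none, x) (Sum.inl e) = some (none, y) := by
    simp [grStep, prodStep, saStep, gaStep, hy]
  have hxQ : (none, x) ∈ Q := mem_of_runFrom_subStep hQ.init_mem hrun
  have hyQ : (none, y) ∈ Q := hQ.controllable _ hxQ e he _ hgr
  refine ⟨s, σ, t ++ [e], hσ, hs, hatt, ?_⟩
  have hword : embed s ++ [Sum.inr σ] ++ embed (t ++ [e]) =
      embed s ++ [Sum.inr σ] ++ embed t ++ [Sum.inl e] := by
    simp [embed]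
  rw [hword, runFrom_append, hrun, Option.bind_some]
  simp [runFrom, subStep_eq_some.mpr ⟨hgr, hxQ, hyQ⟩]

theorem eq_embed_of_runFrom_postAttackStates (hres : ResilientSup f x0 Scv XS XR Bad Q)
    (hvuln : vulnStates f Scv ⊆ Bad) {x : X} {u : List (E ⊕ E)} {q : Option X × X}
    (hx : x ∈ postAttackStates f x0 XS Scv Q)
    (hq : runFrom (subStep (grStep f XS Scv) Q) (none, x) u = some q) : ∃ r, u = embed r := by
  rcases eq_map_inl_or_exists_inr u with hpure | ⟨c, e, v, rfl⟩
  · exact hpure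
  obtain ⟨p, hp, hq⟩ := runFrom_append_eq_some.mp hq
  obtain ⟨y, hy, rfl, -⟩ := runFrom_of_mem_postAttackStates hx hp
  obtain ⟨p', hp', -⟩ := Option.bind_eq_some_iff.mp hq
  have hyvuln := (of_grStep_inr_eq_some (subStep_eq_some.mp hp').1).2
  exact absurd (hvuln hyvuln) (postAttackStates_subset_compl hres hy)

theorem exists_recovery_of_mem_postAttackStates (hres : ResilientSup f x0 Scv XS XR Bad Q)
    (hvuln : vulnStates f Scv ⊆ Bad) {x : X} (hx : x ∈ postAttackStates f x0 XS Scv Q) :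
    ∃ r, (∃ y ∈ XR, runFrom f x r = some y) ∧
      ∀ t, t <+: r → ∀ y, runFrom f x t = some y → y ∈ postAttackStates f x0 XS Scv Q := by
  obtain ⟨s, σ, t, hσ, hs, hatt, hrun⟩ := id hx
  obtain ⟨-, u, q, hq, -, hq₂⟩ :=
    (hres.2 s hs σ hσ hatt).2 t (Option.isSome_iff_exists.mpr ⟨_, hrun⟩)
  rw [runFrom_append, hrun, Option.bind_some] at hq
  obtain ⟨r, rfl⟩ := eq_embed_of_runFrom_postAttackStates hres hvuln hx hq
  obtain ⟨y, -, rfl, hy⟩ := runFrom_of_mem_postAttackStates hx hq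
  refine ⟨r, ⟨y, hq₂, hy⟩, fun t' ⟨w, hw⟩ y' hy' => ?_⟩
  subst hw
  have hq' : runFrom (subStep (grStep f XS Scv) Q) (none, x) (embed t' ++ embed w) =
      some (none, y) := by
    simpa [embed] using hq
  obtain ⟨p, hp, -⟩ := runFrom_append_eq_some.mp hq'
  obtain ⟨z, hz, -, hxz⟩ := runFrom_of_mem_postAttackStates hx hp
  exact (Option.some.inj (hy'.symm.trans hxz)) ▸ hz

theorem detStates_subset_postAttackStates (hres : ResilientSup f x0 Scv XS XR Bad Q) :
    detStates f x0 XS Scv ⊆ postAttackStates f x0 XS Scv Q := by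
  rintro xd ⟨_, ⟨s, σ, rfl, hσ, -, hsL, hatt⟩, hxd⟩
  have hs := hres.1 s hsL
  obtain ⟨p, hp⟩ := Option.isSome_iff_exists.mp (hres.2 s hs σ hσ hatt).1
  have hgr := runFrom_of_runFrom_subStep hp
  obtain ⟨m, -, hm⟩ := runFrom_append_eq_some.mp hgr
  have hp₁ : p.1 = none := (of_grStep_inr_eq_some (by simpa [runFrom] using hm)).1
  have hp₂ : runFrom f x0 (s ++ [σ]) = some p.2 := by
    simpa [embed, grInit] using runFrom_grStep_snd hgr
  have hp_eq : p = (none, xd) := Prod.ext hp₁ (Option.some.inj (hp₂.symm.trans hxd))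
  exact ⟨s, σ, [], hσ, hs, hatt, by simpa [embed, hp_eq] using hp⟩

end Resilience

end RobustRec

theorem RobustRec.AERobustRecoverable_of_exists_resilient_general
    {X E : Type*}
    (f : X → E → Option X) (x0 : X) (Suc Scv : Set E) (XUS XS XR : Set X)
    (hex : ∃ Q : Set (Option X × X), IsGRSupervisor f x0 Suc Scv XS Q ∧
        ResilientSup f x0 Scv XS XR (vulnStates f Scv ∪ XUS) Q) :
    AERobustRecoverable f x0 Suc Scv XUS XS XR := by
  obtain ⟨Q, hQ, hres⟩ := hex
  have hvuln : vulnStates f Scv ⊆ vulnStates f Scv ∪ XUS := Set.subset_union_left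
  exact (detStates_subset_postAttackStates hres).trans <|
    subset_recSet (postAttackStates_subset_compl hres)
      (fun _ hx _ he _ hy => postAttackStates_step_mem hQ hx he hy)
      (fun _ hx => exists_recovery_of_mem_postAttackStates hres hvuln hx)

/-- the "only if" direction of Theorem 2. If there exists a
resilient supervisor `S^R` for the attacked closed-loop system `G^R` w.r.t.
`Σ_{c,v}` and `G_robust`, then the attacked system `Sa/Ga` is AE-robust
recoverable w.r.t. `G_robust`, i.e. every detection state admits a
robust-recovery strategy leading to `G_robust`. -/
theorem RobustRec.AERobustRecoverable_of_exists_resilient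
    {X E : Type*} [Fintype X] [Fintype E]
    (f : X → E → Option X) (x0 : X) (Sc Suc Scv : Set E) (XUS XS XR : Set X)
    (hdisj : Sc ∩ Suc = ∅) (hcover : Sc ∪ Suc = Set.univ) (hScv : Scv ⊆ Sc)
    (hS : IsSupervisor f x0 Suc XUS XS)
    (hXR : XR ∩ (vulnStates f Scv ∪ XUS) = ∅)
    (hex : ∃ Q : Set (Option X × X), IsGRSupervisor f x0 Suc Scv XS Q ∧
        ResilientSup f x0 Scv XS XR (vulnStates f Scv ∪ XUS) Q) :
    AERobustRecoverable f x0 Suc Scv XUS XS XR :=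
  RobustRec.AERobustRecoverable_of_exists_resilient_general f x0 Suc Scv XUS XS XR hex
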